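/- For every index j ∈ {0, 1, …, n}, the set of points of S whose j-th homogeneous coordinate vanishes (i.e., the fixed point set of the automorphism φ_j of S) is finite of cardinality exactly k^{n−1}. -/

import Mathlib

/-!
The equations say that `x_m^k = a_m x_0^k + b_m x_1^k` for all `m`, with coefficient pairs
`(a_m, b_m)` that are pairwise linearly independent exactly because the `λ_i` are nonzero and
distinct. If `x_j = 0`, then `(x_0^k, x_1^k)` is proportional to `(b_j, -a_j)`, so `x_m^k` is
proportional to the minor `a_m b_j - b_m a_j`, which vanishes only for `m = j`. In the affine
chart `x_c = 1` (any `c ≠ j`) the points are therefore the tuples with `x_c = 1`, `x_j = 0` and,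
for each of the remaining `n - 1` indices, `x_m` one of the `k` roots of a fixed nonzero number.
-/

open Fin.NatCast in
/-- A nonzero vector `x ∈ ℂ^{n+1}` satisfies the defining equations of the generalized
Fermat curve of type `(k,n)`: `lam i * x₀^k + x₁^k + x_{i+2}^k = 0` for `0 ≤ i ≤ n - 2`
(with `lam 0 = 1`). -/
def fermatEqns (n k : ℕ) (lam : ℕ → ℂ) (x : Fin (n + 1) → ℂ) : Prop :=
  ∀ i : ℕ, i ≤ n - 2 → lam i * x 0 ^ k + x 1 ^ k + x ((i + 2 : ℕ) : Fin (n + 1)) ^ k = 0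

open Polynomial in
theorem IsAlgClosed.encard_setOf_pow_eq {K : Type*} [Field K] [IsAlgClosed K] {k : ℕ}
    (hk : (k : K) ≠ 0) {a : K} (ha : a ≠ 0) : {z : K | z ^ k = a}.encard = k := by
  have hk0 : k ≠ 0 := by rintro rfl; simp at hk
  have hroots : {z : K | z ^ k = a} = (X ^ k - C a).rootSet K := by
    ext z
    simp [mem_rootSet, X_pow_sub_C_ne_zero (Nat.pos_of_ne_zero hk0), sub_eq_zero]
  rw [hroots, Set.encard_eq_coe_toFinset_card, Set.toFinset_card,
    card_rootSet_eq_natDegree (separable_X_pow_sub_C a hk ha) (IsAlgClosed.splits _),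
    natDegree_X_pow_sub_C]

theorem IsAlgClosed.encard_pi_setOf_pow_eq {ι K : Type*} [Fintype ι] [DecidableEq ι] [Field K]
    [IsAlgClosed K] {k : ℕ} (hk : (k : K) ≠ 0) {r : ι → K} {c j : ι} (hcj : c ≠ j)
    (hrj : r j = 0) (hr : ∀ m ≠ j, r m ≠ 0) :
    (Set.univ.pi fun m => if m = c then {1} else {z : K | z ^ k = r m}).encard =
      k ^ (Fintype.card ι - 2) := by
  have hk0 : k ≠ 0 := by rintro rfl; simp at hk
  have hfactor : ∀ m ∈ ({c, j} : Finset ι)ᶜ,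
      (if m = c then {1} else {z : K | z ^ k = r m}).encard = k := by
    intro m hm
    simp only [Finset.mem_compl, Finset.mem_insert, Finset.mem_singleton, not_or] at hm
    rw [if_neg hm.1, encard_setOf_pow_eq hk (hr m hm.2)]
  rw [Set.encard_pi_eq_prod_encard, ← Finset.prod_compl_mul_prod {c, j},
    Finset.prod_congr rfl hfactor, Finset.prod_pair hcj, if_pos rfl, if_neg hcj.symm, hrj]
  have hzero : {z : K | z ^ k = 0} = {0} := by ext; simp [pow_eq_zero_iff hk0]
  simp only [hzero, Set.encard_singleton, mul_one, Finset.prod_const, Finset.card_compl,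
    Finset.card_pair hcj]

namespace Projectivization
open scoped LinearAlgebra.Projectivization
variable {K V : Type*} [Field K] [AddCommGroup V] [Module K V]

noncomputable def affineRep (f : V →ₗ[K] K) (p : ℙ K V) : V := (f p.rep)⁻¹ • p.rep

theorem affineRep_injOn (f : V →ₗ[K] K) : Set.InjOn (affineRep f) {p : ℙ K V | f p.rep ≠ 0} := by
  intro p hp q hq hpq
  have hrep : p.rep = (f p.rep * (f q.rep)⁻¹) • q.rep := by
    rw [← smul_smul, ← affineRep, ← hpq, affineRep, smul_smul, mul_inv_cancel₀ hp, one_smul]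
  rw [← p.mk_rep, ← q.mk_rep, mk_eq_mk_iff]
  exact ⟨Units.mk0 _ (mul_ne_zero hp (inv_ne_zero hq)), hrep.symm⟩

theorem image_affineRep {P : V → Prop} (hP : ∀ (t : K) v, P v → P (t • v)) {f : V →ₗ[K] K}
    (hf : ∀ v, P v → f v = 0 → v = 0) :
    affineRep f '' {p : ℙ K V | P p.rep} = {v | P v ∧ f v = 1} := by
  ext v
  constructor
  · rintro ⟨p, hp, rfl⟩
    have hfp : f p.rep ≠ 0 := fun h => p.rep_nonzero (hf _ hp h)
    exact ⟨hP _ _ hp, by simp [affineRep, inv_mul_cancel₀ hfp]⟩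
  · rintro ⟨hv, hfv⟩
    have hv0 : v ≠ 0 := by rintro rfl; simp at hfv
    obtain ⟨t, ht⟩ := exists_smul_eq_mk_rep K v hv0
    refine ⟨mk K v hv0, ?_, ?_⟩
    · rw [Set.mem_ofPred_eq, ← ht]; exact hP _ _ hv
    · simp [affineRep, ← ht, hfv, Units.smul_def, smul_smul]

theorem encard_setOf_rep {P : V → Prop} (hP : ∀ (t : K) v, P v → P (t • v)) {f : V →ₗ[K] K}
    (hf : ∀ v, P v → f v = 0 → v = 0) :
    {p : ℙ K V | P p.rep}.encard = {v | P v ∧ f v = 1}.encard := by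
  rw [← image_affineRep hP hf, ((affineRep_injOn f).mono fun p hp => ?_).encard_image]
  exact fun h => p.rep_nonzero (hf _ hp h)

end Projectivization

open Fin.NatCast in
theorem Fin.natCast_val_add_two {n : ℕ} (i : Fin (n + 1)) :
    ((i + 2 : ℕ) : Fin (n + 2 + 1)) = i.succ.succ := by
  rw [Fin.ext_iff, Fin.val_natCast, Nat.mod_eq_of_lt (by omega)]
  rfl

namespace GeneralizedFermat

open Fin.NatCast

variable {n k : ℕ} {lam : ℕ → ℂ}

theorem fermatEqns_smul {x : Fin (n + 1) → ℂ} (hx : fermatEqns n k lam x) (t : ℂ) :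
    fermatEqns n k lam (t • x) := by
  intro i hi
  simp only [Pi.smul_apply, smul_eq_mul, mul_pow]
  linear_combination t ^ k * hx i hi

def coeffA (lam : ℕ → ℂ) : Fin (n + 2 + 1) → ℂ := Fin.cons 1 (Fin.cons 0 fun i => -lam i)

def coeffB : Fin (n + 2 + 1) → ℂ := Fin.cons 0 (Fin.cons 1 fun _ => -1)

def minor (lam : ℕ → ℂ) (m j : Fin (n + 2 + 1)) : ℂ :=
  coeffA lam m * coeffB j - coeffB m * coeffA lam j

theorem fermatEqns_iff {x : Fin (n + 2 + 1) → ℂ} :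
    fermatEqns (n + 2) k lam x ↔ ∀ m, x m ^ k = coeffA lam m * x 0 ^ k + coeffB m * x 1 ^ k := by
  simp only [fermatEqns, Nat.add_sub_cancel]
  constructor
  · intro h m
    induction m using Fin.cases with
    | zero => simp [coeffA, coeffB]
    | succ m =>
      induction m using Fin.cases with
      | zero => simp [coeffA, coeffB]
      | succ i =>
        have := h i (by omega)
        rw [Fin.natCast_val_add_two] at this
        simp only [coeffA, coeffB, Fin.cons_succ]
        linear_combination this
  · intro h i hi
    rw [show ((i + 2 : ℕ) : Fin (n + 2 + 1)) = _ from Fin.natCast_val_add_two ⟨i, by omega⟩]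
    have := h (Fin.succ (Fin.succ ⟨i, by omega⟩))
    simp only [coeffA, coeffB, Fin.cons_succ] at this
    linear_combination this

theorem minor_self (j : Fin (n + 2 + 1)) : minor lam j j = 0 := by
  rw [minor, mul_comm, sub_self]

theorem minor_ne_zero (hlam : ∀ i : Fin (n + 1), lam i ≠ 0)
    (hinj : Function.Injective fun i : Fin (n + 1) => lam i) {m j : Fin (n + 2 + 1)}
    (hmj : m ≠ j) : minor lam m j ≠ 0 := by
  have trichotomy (m : Fin (n + 2 + 1)) : m = 0 ∨ m = 1 ∨ ∃ i : Fin (n + 1), m = i.succ.succ := by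
    rcases Fin.eq_zero_or_eq_succ m with rfl | ⟨m, rfl⟩
    · exact .inl rfl
    rcases Fin.eq_zero_or_eq_succ m with rfl | ⟨i, rfl⟩
    · exact .inr (.inl rfl)
    · exact .inr (.inr ⟨i, rfl⟩)
  rcases trichotomy m with rfl | rfl | ⟨m, rfl⟩ <;>
  rcases trichotomy j with rfl | rfl | ⟨j, rfl⟩
  all_goals simp [minor, coeffA, coeffB, hlam, sub_eq_zero] at hmj ⊢
  exact fun h => hmj (hinj h)

theorem pow_mul_minor_eq {x : Fin (n + 2 + 1) → ℂ} (hx : fermatEqns (n + 2) k lam x) (hk : k ≠ 0)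
    {j : Fin (n + 2 + 1)} (hj : x j = 0) (m c : Fin (n + 2 + 1)) :
    x m ^ k * minor lam c j = minor lam m j * x c ^ k := by
  rw [fermatEqns_iff] at hx
  have hxj := hx j
  rw [hj, zero_pow hk] at hxj
  rw [hx m, hx c, minor, minor]
  linear_combination (coeffA lam m * coeffB c - coeffB m * coeffA lam c) * hxj

theorem eq_zero_of_apply_eq_zero {x : Fin (n + 2 + 1) → ℂ} (hx : fermatEqns (n + 2) k lam x)
    (hk : k ≠ 0) {c j : Fin (n + 2 + 1)} (hj : x j = 0) (hc : minor lam c j ≠ 0) (hxc : x c = 0) :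
    x = 0 := by
  funext m
  have := pow_mul_minor_eq hx hk hj m c
  rw [hxc, zero_pow hk, mul_zero, mul_eq_zero, or_iff_left hc, pow_eq_zero_iff hk] at this
  exact this

theorem setOf_eq_pi (hk : k ≠ 0) {c j : Fin (n + 2 + 1)} (hc : minor lam c j ≠ 0) :
    {x | (fermatEqns (n + 2) k lam x ∧ x j = 0) ∧ x c = 1} =
      Set.univ.pi fun m => if m = c then {1} else {z | z ^ k = minor lam m j / minor lam c j} := by
  ext x
  simp only [Set.mem_ofPred_eq, Set.mem_univ_pi]
  constructor
  · rintro ⟨⟨hx, hxj⟩, hxc⟩ m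
    split_ifs with hm
    · rwa [hm]
    · have := pow_mul_minor_eq hx hk hxj m c
      rw [hxc, one_pow, mul_one] at this
      exact (eq_div_iff hc).2 this
  · intro h
    have hxc : x c = 1 := by simpa using h c
    have hpow : ∀ m, x m ^ k = minor lam m j / minor lam c j := by
      intro m
      by_cases hm : m = c
      · rw [hm, hxc, one_pow, div_self hc]
      · simpa [hm] using h m
    refine ⟨⟨fermatEqns_iff.2 fun m => ?_, ?_⟩, hxc⟩
    · rw [hpow m, hpow 0, hpow 1]
      simp only [minor, coeffA, coeffB, Fin.cons_zero, Fin.cons_one]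
      field_simp
      ring
    · rw [← pow_eq_zero_iff hk, hpow j, minor_self, zero_div]

end GeneralizedFermat

theorem stmt_9_general (k n : ℕ) (hk : 2 ≤ k) (hn : 2 ≤ n)
    (lam : ℕ → ℂ) (hlam0 : lam 0 = 1)
    (hlam_ne0 : ∀ i, 1 ≤ i → i ≤ n - 2 → lam i ≠ 0)
    (hlam_inj : ∀ i j, i ≤ n - 2 → j ≤ n - 2 → lam i = lam j → i = j) :
    ∀ j : Fin (n + 1),
      {p : Projectivization ℂ (Fin (n + 1) → ℂ) |
          fermatEqns n k lam p.rep ∧ p.rep j = 0}.Finite ∧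
      {p : Projectivization ℂ (Fin (n + 1) → ℂ) |
          fermatEqns n k lam p.rep ∧ p.rep j = 0}.ncard = k ^ (n - 1) := by
  obtain ⟨n, rfl⟩ := Nat.exists_eq_add_of_le' hn
  intro j
  have hk0 : k ≠ 0 := by omega
  have hlam (i : Fin (n + 1)) : lam i ≠ 0 := by
    rcases Nat.eq_zero_or_pos i with h | h
    · simp [h, hlam0]
    · exact hlam_ne0 i h (by omega)
  have hinj : Function.Injective fun i : Fin (n + 1) => lam i :=
    fun i i' h => Fin.ext (hlam_inj i i' (by omega) (by omega) h)
  obtain ⟨c, hcj⟩ := exists_ne j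
  have hc := GeneralizedFermat.minor_ne_zero hlam hinj hcj
  have hcount : {p : Projectivization ℂ (Fin (n + 2 + 1) → ℂ) |
      fermatEqns (n + 2) k lam p.rep ∧ p.rep j = 0}.encard = (k ^ (n + 1) : ℕ) := by
    rw [Projectivization.encard_setOf_rep (P := fun x => fermatEqns (n + 2) k lam x ∧ x j = 0)
      (f := LinearMap.proj c)
      (fun t x hx => ⟨GeneralizedFermat.fermatEqns_smul hx.1 t, by simp [hx.2]⟩)
      (fun x hx hxc => GeneralizedFermat.eq_zero_of_apply_eq_zero hx.1 hk0 hx.2 hc hxc)]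
    simp only [LinearMap.proj_apply]
    rw [GeneralizedFermat.setOf_eq_pi hk0 hc,
      IsAlgClosed.encard_pi_setOf_pow_eq (by exact_mod_cast hk0) hcj
        (by rw [GeneralizedFermat.minor_self, zero_div])
        (fun m hm => div_ne_zero (GeneralizedFermat.minor_ne_zero hlam hinj hm) hc)]
    simp
  refine ⟨Set.finite_of_encard_eq_coe hcount, ?_⟩
  rw [Set.ncard_def, hcount, ENat.toNat_natCast]
  rfl

/-- for each `j`, the fixed point set of the automorphism `φ_j` of the
generalized Fermat curve `S` of type `(k,n)`, i.e. the set of points of `S` whose `j`-th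
homogeneous coordinate vanishes, is finite of cardinality exactly `k^{n-1}`. -/
theorem stmt_9 (k n : ℕ) (hk : 2 ≤ k) (hn : 2 ≤ n)
    (lam : ℕ → ℂ) (hlam0 : lam 0 = 1)
    (hlam_ne0 : ∀ i, 1 ≤ i → i ≤ n - 2 → lam i ≠ 0)
    (hlam_ne1 : ∀ i, 1 ≤ i → i ≤ n - 2 → lam i ≠ 1)
    (hlam_inj : ∀ i j, i ≤ n - 2 → j ≤ n - 2 → lam i = lam j → i = j) :
    ∀ j : Fin (n + 1),
      {p : Projectivization ℂ (Fin (n + 1) → ℂ) |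
          fermatEqns n k lam p.rep ∧ p.rep j = 0}.Finite ∧
      {p : Projectivization ℂ (Fin (n + 1) → ℂ) |
          fermatEqns n k lam p.rep ∧ p.rep j = 0}.ncard = k ^ (n - 1) :=
  stmt_9_general k n hk hn lam hlam0 hlam_ne0 hlam_inj
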